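/- Instability of C(k)-freeness: there exists a family of compact convex sets in the plane that is C(3)-free and C(5)-free but not C(4)-free. -/

import Mathlib

open Set

noncomputable section

abbrev Plane := EuclideanSpace ℝ (Fin 2)

/-- A line in the plane: a point plus a nonzero direction. -/
def IsLine (L : Set Plane) : Prop :=
  ∃ p v : Plane, v ≠ 0 ∧ L = {x | ∃ t : ℝ, x = p + t • v}

/-- A `C(k)` family: `k` distinct sets such that the convex hulls of consecutive
unions are disjoint whenever the index pairs (mod `k`) are disjoint. -/
def IsCk (k : ℕ) [NeZero k] (F : Fin k → Set Plane) : Prop :=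
  Function.Injective F ∧
  ∀ i j : Fin k, Disjoint ({i, i + 1} : Finset (Fin k)) ({j, j + 1} : Finset (Fin k)) →
    convexHull ℝ (F i ∪ F (i + 1)) ∩ convexHull ℝ (F j ∪ F (j + 1)) = ∅
/-- A C(3): three distinct pairwise disjoint sets that are not a tight triple. -/
def IsC3 (A B C : Set Plane) : Prop :=
  A ≠ B ∧ A ≠ C ∧ B ≠ C ∧ A ∩ B = ∅ ∧ A ∩ C = ∅ ∧ B ∩ C = ∅ ∧
  convexHull ℝ (A ∪ B) ∩ convexHull ℝ (B ∪ C) ∩ convexHull ℝ (C ∪ A) = ∅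

namespace CkAux

/-- The point `(a, b)` of the plane. -/
def pt (a b : ℝ) : Plane := (WithLp.equiv 2 (Fin 2 → ℝ)).symm ![a, b]

@[simp] lemma pt_zero (a b : ℝ) : pt a b 0 = a := rfl
@[simp] lemma pt_one (a b : ℝ) : pt a b 1 = b := rfl

lemma lin0 : IsLinearMap ℝ (fun x : Plane => x 0) := ⟨fun _ _ => rfl, fun _ _ => rfl⟩
lemma lin1 : IsLinearMap ℝ (fun x : Plane => x 1) := ⟨fun _ _ => rfl, fun _ _ => rfl⟩

lemma pt_comb (a b c d s t : ℝ) :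
    s • pt a b + t • pt c d = pt (s*a + t*c) (s*b + t*d) := by
  ext i; fin_cases i <;> simp [pt]

/-- The four segments of the pinwheel. -/
def S0 : Set Plane := segment ℝ (pt 2 1) (pt 2 20)
def S1 : Set Plane := segment ℝ (pt (-1) 2) (pt (-20) 2)
def S2 : Set Plane := segment ℝ (pt (-2) (-1)) (pt (-2) (-20))
def S3 : Set Plane := segment ℝ (pt 1 (-2)) (pt 20 (-2))

lemma isCompact_seg (x y : Plane) : IsCompact (segment ℝ x y) := by
  rw [segment_eq_image']
  exact isCompact_Icc.image (by continuity)

/-- membership of endpoints -/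
lemma m00 : pt 2 1 ∈ S0 := left_mem_segment ℝ _ _
lemma m10 : pt (-1) 2 ∈ S1 := left_mem_segment ℝ _ _
lemma m20 : pt (-2) (-1) ∈ S2 := left_mem_segment ℝ _ _
lemma m30 : pt 1 (-2) ∈ S3 := left_mem_segment ℝ _ _

/-- interior points of the segments -/
lemma m0i : pt 2 11 ∈ S0 :=
  ⟨9/19, 10/19, by norm_num, by norm_num, by norm_num, by rw [pt_comb]; norm_num⟩
lemma m1i : pt (-11) 2 ∈ S1 :=
  ⟨9/19, 10/19, by norm_num, by norm_num, by norm_num, by rw [pt_comb]; norm_num⟩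
lemma m2i : pt (-2) (-11) ∈ S2 :=
  ⟨9/19, 10/19, by norm_num, by norm_num, by norm_num, by rw [pt_comb]; norm_num⟩
lemma m3i : pt 11 (-2) ∈ S3 :=
  ⟨9/19, 10/19, by norm_num, by norm_num, by norm_num, by rw [pt_comb]; norm_num⟩

/-- Coordinate bounds on the four segments. -/
lemma S0_sub : S0 ⊆ {x : Plane | x 0 = 2 ∧ 1 ≤ x 1} := by
  have hc : Convex ℝ {x : Plane | x 0 = 2 ∧ 1 ≤ x 1} :=
    (convex_hyperplane lin0 2).inter (convex_halfSpace_ge lin1 1)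
  exact hc.segment_subset (by constructor <;> norm_num) (by constructor <;> norm_num)

lemma S1_sub : S1 ⊆ {x : Plane | x 1 = 2 ∧ x 0 ≤ -1} := by
  have hc : Convex ℝ {x : Plane | x 1 = 2 ∧ x 0 ≤ -1} :=
    (convex_hyperplane lin1 2).inter (convex_halfSpace_le lin0 (-1))
  exact hc.segment_subset (by constructor <;> norm_num) (by constructor <;> norm_num)

lemma S2_sub : S2 ⊆ {x : Plane | x 0 = -2 ∧ x 1 ≤ -1} := by
  have hc : Convex ℝ {x : Plane | x 0 = -2 ∧ x 1 ≤ -1} :=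
    (convex_hyperplane lin0 (-2)).inter (convex_halfSpace_le lin1 (-1))
  exact hc.segment_subset (by constructor <;> norm_num) (by constructor <;> norm_num)

lemma S3_sub : S3 ⊆ {x : Plane | x 1 = -2 ∧ 1 ≤ x 0} := by
  have hc : Convex ℝ {x : Plane | x 1 = -2 ∧ 1 ≤ x 0} :=
    (convex_hyperplane lin1 (-2)).inter (convex_halfSpace_ge lin0 1)
  exact hc.segment_subset (by constructor <;> norm_num) (by constructor <;> norm_num)

/-- Bounds for hulls of unions -/
lemma h01_sub : convexHull ℝ (S0 ∪ S1) ⊆ {x : Plane | 1 ≤ x 1} := by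
  apply convexHull_min _ (convex_halfSpace_ge lin1 1)
  rintro x (hx | hx)
  · exact (S0_sub hx).2
  · have := (S1_sub hx).1; simp only [mem_setOf_eq]; linarith

lemma h23_sub : convexHull ℝ (S2 ∪ S3) ⊆ {x : Plane | x 1 ≤ -1} := by
  apply convexHull_min _ (convex_halfSpace_le lin1 (-1))
  rintro x (hx | hx)
  · exact (S2_sub hx).2
  · have := (S3_sub hx).1; simp only [mem_setOf_eq]; linarith

lemma h12_sub : convexHull ℝ (S1 ∪ S2) ⊆ {x : Plane | x 0 ≤ -1} := by
  apply convexHull_min _ (convex_halfSpace_le lin0 (-1))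
  rintro x (hx | hx)
  · exact (S1_sub hx).2
  · have := (S2_sub hx).1; simp only [mem_setOf_eq]; linarith

lemma h30_sub : convexHull ℝ (S3 ∪ S0) ⊆ {x : Plane | 1 ≤ x 0} := by
  apply convexHull_min _ (convex_halfSpace_ge lin0 1)
  rintro x (hx | hx)
  · exact (S3_sub hx).2
  · have := (S0_sub hx).1; simp only [mem_setOf_eq]; linarith

/-- The two C4 disjointness statements. -/
lemma e0123 : convexHull ℝ (S0 ∪ S1) ∩ convexHull ℝ (S2 ∪ S3) = ∅ := by
  rw [eq_empty_iff_forall_notMem]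
  rintro x ⟨h1, h2⟩
  have a := h01_sub h1; have b := h23_sub h2
  simp only [mem_setOf_eq] at a b; linarith

lemma e1230 : convexHull ℝ (S1 ∪ S2) ∩ convexHull ℝ (S3 ∪ S0) = ∅ := by
  rw [eq_empty_iff_forall_notMem]
  rintro x ⟨h1, h2⟩
  have a := h12_sub h1; have b := h30_sub h2
  simp only [mem_setOf_eq] at a b; linarith

/-- Mixed convex combinations are in the hull of the union. -/
lemma mem_hull_left {X Y : Set Plane} {u : Plane} (hu : u ∈ X) :
    u ∈ convexHull ℝ (X ∪ Y) :=
  subset_convexHull ℝ _ (mem_union_left _ hu)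

lemma mem_hull_right {X Y : Set Plane} {u : Plane} (hu : u ∈ Y) :
    u ∈ convexHull ℝ (X ∪ Y) :=
  subset_convexHull ℝ _ (mem_union_right _ hu)

lemma mem_hull_mix {X Y : Set Plane} {u v w : Plane} (hu : u ∈ X) (hv : v ∈ Y)
    {a b : ℝ} (ha : 0 ≤ a) (hb : 0 ≤ b) (hab : a + b = 1)
    (hw : a • u + b • v = w) : w ∈ convexHull ℝ (X ∪ Y) :=
  hw ▸ (convex_convexHull ℝ _) (mem_hull_left hu) (mem_hull_right hv) ha hb hab

/-- Tightness witnesses. -/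
lemma w012_02 : pt (-1) 2 ∈ convexHull ℝ (S0 ∪ S2) :=
  mem_hull_mix m0i m20 (by norm_num) (by norm_num) (by norm_num : (1:ℝ)/4 + 3/4 = 1)
    (by rw [pt_comb]; norm_num)

lemma w013_13 : pt 2 1 ∈ convexHull ℝ (S1 ∪ S3) :=
  mem_hull_mix m10 m3i (by norm_num) (by norm_num) (by norm_num : (3:ℝ)/4 + 1/4 = 1)
    (by rw [pt_comb]; norm_num)

lemma w023_02 : pt 1 (-2) ∈ convexHull ℝ (S0 ∪ S2) :=
  mem_hull_mix m00 m2i (by norm_num) (by norm_num) (by norm_num : (3:ℝ)/4 + 1/4 = 1)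
    (by rw [pt_comb]; norm_num)

lemma w123_13 : pt (-2) (-1) ∈ convexHull ℝ (S1 ∪ S3) :=
  mem_hull_mix m1i m30 (by norm_num) (by norm_num) (by norm_num : (1:ℝ)/4 + 3/4 = 1)
    (by rw [pt_comb]; norm_num)

/-- A witness point in all three pairwise hulls refutes `IsC3` in every order. -/
lemma not_isC3_of_mem {A B C : Set Plane} {w : Plane}
    (h1 : w ∈ convexHull ℝ (A ∪ B)) (h2 : w ∈ convexHull ℝ (B ∪ C))
    (h3 : w ∈ convexHull ℝ (C ∪ A)) : ¬ IsC3 A B C := by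
  rintro ⟨-, -, -, -, -, -, h⟩
  have : w ∈ convexHull ℝ (A ∪ B) ∩ convexHull ℝ (B ∪ C) ∩ convexHull ℝ (C ∪ A) :=
    ⟨⟨h1, h2⟩, h3⟩
  rw [h] at this
  exact this

lemma mem_hull_comm {X Y : Set Plane} {w : Plane}
    (h : w ∈ convexHull ℝ (X ∪ Y)) : w ∈ convexHull ℝ (Y ∪ X) := by
  rwa [union_comm]

lemma noC3_pack {X Y Z : Set Plane} {w : Plane}
    (hXY : w ∈ convexHull ℝ (X ∪ Y)) (hXZ : w ∈ convexHull ℝ (X ∪ Z))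
    (hYZ : w ∈ convexHull ℝ (Y ∪ Z)) :
    ¬ IsC3 X Y Z ∧ ¬ IsC3 X Z Y ∧ ¬ IsC3 Y X Z ∧ ¬ IsC3 Y Z X ∧
      ¬ IsC3 Z X Y ∧ ¬ IsC3 Z Y X :=
  ⟨not_isC3_of_mem hXY hYZ (mem_hull_comm hXZ),
   not_isC3_of_mem hXZ (mem_hull_comm hYZ) (mem_hull_comm hXY),
   not_isC3_of_mem (mem_hull_comm hXY) hXZ (mem_hull_comm hYZ),
   not_isC3_of_mem hYZ (mem_hull_comm hXZ) hXY,
   not_isC3_of_mem (mem_hull_comm hXZ) hXY hYZ,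
   not_isC3_of_mem (mem_hull_comm hYZ) (mem_hull_comm hXY) hXZ⟩

/-- the four tightness packages -/
lemma T012 : ¬ IsC3 S0 S1 S2 ∧ ¬ IsC3 S0 S2 S1 ∧ ¬ IsC3 S1 S0 S2 ∧ ¬ IsC3 S1 S2 S0 ∧
    ¬ IsC3 S2 S0 S1 ∧ ¬ IsC3 S2 S1 S0 :=
  noC3_pack (mem_hull_right m10) w012_02 (mem_hull_left m10)

lemma T013 : ¬ IsC3 S0 S1 S3 ∧ ¬ IsC3 S0 S3 S1 ∧ ¬ IsC3 S1 S0 S3 ∧ ¬ IsC3 S1 S3 S0 ∧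
    ¬ IsC3 S3 S0 S1 ∧ ¬ IsC3 S3 S1 S0 :=
  noC3_pack (mem_hull_left m00) (mem_hull_left m00) w013_13

lemma T023 : ¬ IsC3 S0 S2 S3 ∧ ¬ IsC3 S0 S3 S2 ∧ ¬ IsC3 S2 S0 S3 ∧ ¬ IsC3 S2 S3 S0 ∧
    ¬ IsC3 S3 S0 S2 ∧ ¬ IsC3 S3 S2 S0 :=
  noC3_pack w023_02 (mem_hull_right m30) (mem_hull_right m30)

lemma T123 : ¬ IsC3 S1 S2 S3 ∧ ¬ IsC3 S1 S3 S2 ∧ ¬ IsC3 S2 S1 S3 ∧ ¬ IsC3 S2 S3 S1 ∧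
    ¬ IsC3 S3 S1 S2 ∧ ¬ IsC3 S3 S2 S1 :=
  noC3_pack (mem_hull_right m20) w123_13 (mem_hull_left m20)

/-- distinctness of the four segments -/
lemma n01 : S0 ≠ S1 := fun h => by have := (S1_sub (h ▸ m00)).1; norm_num at this
lemma n02 : S0 ≠ S2 := fun h => by have := (S2_sub (h ▸ m00)).1; norm_num at this
lemma n03 : S0 ≠ S3 := fun h => by have := (S3_sub (h ▸ m00)).1; norm_num at this
lemma n12 : S1 ≠ S2 := fun h => by have := (S2_sub (h ▸ m10)).1; norm_num at this
lemma n13 : S1 ≠ S3 := fun h => by have := (S3_sub (h ▸ m10)).1; norm_num at this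
lemma n23 : S2 ≠ S3 := fun h => by have := (S3_sub (h ▸ m20)).1; norm_num at this

end CkAux

open CkAux
/-- there is a family of compact convex sets in the plane that is
C(3)-free and C(5)-free but not C(4)-free. -/
theorem ck_freeness_unstable :
    ∃ F : Finset (Set Plane),
      (∀ S ∈ F, IsCompact S ∧ Convex ℝ S) ∧
      (¬ ∃ A B C : Set Plane, A ∈ F ∧ B ∈ F ∧ C ∈ F ∧ IsC3 A B C) ∧
      (¬ ∃ G : Fin 5 → Set Plane, (∀ i, G i ∈ (F : Set (Set Plane))) ∧ IsCk 5 G) ∧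
      (∃ G : Fin 4 → Set Plane, (∀ i, G i ∈ (F : Set (Set Plane))) ∧ IsCk 4 G) := by
  classical
  refine ⟨{S0, S1, S2, S3}, ?_, ?_, ?_, ?_⟩
  · intro S hS
    simp only [Finset.mem_insert, Finset.mem_singleton] at hS
    rcases hS with rfl | rfl | rfl | rfl <;>
      exact ⟨isCompact_seg _ _, convex_segment _ _⟩
  · rintro ⟨A, B, C, hA, hB, hC, h3⟩
    simp only [Finset.mem_insert, Finset.mem_singleton] at hA hB hC
    rcases hA with rfl | rfl | rfl | rfl <;> rcases hB with rfl | rfl | rfl | rfl <;>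
      rcases hC with rfl | rfl | rfl | rfl <;>
      first
        | exact h3.1 rfl
        | exact h3.2.1 rfl
        | exact h3.2.2.1 rfl
        | exact T012.1 h3 | exact T012.2.1 h3 | exact T012.2.2.1 h3
        | exact T012.2.2.2.1 h3 | exact T012.2.2.2.2.1 h3 | exact T012.2.2.2.2.2 h3
        | exact T013.1 h3 | exact T013.2.1 h3 | exact T013.2.2.1 h3
        | exact T013.2.2.2.1 h3 | exact T013.2.2.2.2.1 h3 | exact T013.2.2.2.2.2 h3
        | exact T023.1 h3 | exact T023.2.1 h3 | exact T023.2.2.1 h3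
        | exact T023.2.2.2.1 h3 | exact T023.2.2.2.2.1 h3 | exact T023.2.2.2.2.2 h3
        | exact T123.1 h3 | exact T123.2.1 h3 | exact T123.2.2.1 h3
        | exact T123.2.2.2.1 h3 | exact T123.2.2.2.2.1 h3 | exact T123.2.2.2.2.2 h3
  · rintro ⟨G, hG, hinj, -⟩
    have hcard : (Finset.univ : Finset (Fin 5)).card ≤
        ({S0, S1, S2, S3} : Finset (Set Plane)).card :=
      Finset.card_le_card_of_injOn G (fun i _ => Finset.mem_coe.mp (hG i)) hinj.injOn
    have h5 : (Finset.univ : Finset (Fin 5)).card = 5 := by simp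
    have h4 : ({S0, S1, S2, S3} : Finset (Set Plane)).card ≤ 4 := by
      calc ({S0, S1, S2, S3} : Finset (Set Plane)).card
          ≤ ({S1, S2, S3} : Finset (Set Plane)).card + 1 := Finset.card_insert_le _ _
        _ ≤ (({S2, S3} : Finset (Set Plane)).card + 1) + 1 :=
            Nat.add_le_add_right (Finset.card_insert_le _ _) 1
        _ ≤ ((({S3} : Finset (Set Plane)).card + 1) + 1) + 1 :=
            Nat.add_le_add_right (Nat.add_le_add_right (Finset.card_insert_le _ _) 1) 1
        _ ≤ 4 := by simp
    omega
  · refine ⟨![S0, S1, S2, S3], ?_, ?_, ?_⟩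
    · intro i
      fin_cases i <;> simp [Finset.mem_insert]
    · intro i j h
      fin_cases i <;> fin_cases j <;>
        simp only [Fin.isValue, Matrix.cons_val_zero, Matrix.cons_val_one, Matrix.head_cons,
          Matrix.cons_val_two, Matrix.tail_cons, Matrix.cons_val_three] at h ⊢ <;>
        first
          | rfl
          | exact absurd h n01 | exact absurd h n02 | exact absurd h n03
          | exact absurd h n12 | exact absurd h n13 | exact absurd h n23
          | exact absurd h.symm n01 | exact absurd h.symm n02 | exact absurd h.symm n03
          | exact absurd h.symm n12 | exact absurd h.symm n13 | exact absurd h.symm n23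
    · intro i j hij
      fin_cases i <;> fin_cases j <;>
        simp only [Fin.isValue, Fin.reduceAdd, Matrix.cons_val_zero, Matrix.cons_val_one,
          Matrix.head_cons, Matrix.cons_val_two, Matrix.tail_cons,
          Matrix.cons_val_three] at hij ⊢ <;>
        first
          | exact absurd hij (by decide)
          | exact e0123
          | exact e1230
          | (rw [Set.inter_comm]; first | exact e0123 | exact e1230)
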